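/- Let α_ε ∈ C^1(ℝ) with α_ε′ ≥ c > 0 on ℝ and α_ε(0) convergent, and β_ε ∈ C^1(ℝ) with |β_ε| ≤ C on ℝ. Define W_ε(x) = (α_ε(x_1) e^{β_ε(α_ε(x_1)α_ε(x_2))}, α_ε(x_2) e^{−β_ε(α_ε(x_1)α_ε(x_2))}) on ℝ^2. Then the family W_ε is uniformly proper: for every compact K ⊂ ℝ^2 there exists a compact K′ with W_ε^{-1}(K) ⊂ K′ for all small ε. -/

import Mathlib

open Filter

lemma stmt16_key (c : ℝ) (f : ℝ → ℝ) (hf : Differentiable ℝ f)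
    (h : ∀ t, c ≤ deriv f t) (t : ℝ) : c * |t| ≤ |f t - f 0| := by
  have hg : ∀ s u : ℝ, s ≤ u → c * (u - s) ≤ f u - f s := by
    intro s u hsu
    have hmono : MonotoneOn (fun x => f x - c * x) (Set.Icc s u) := by
      apply monotoneOn_of_deriv_nonneg (convex_Icc s u)
      · exact (hf.continuous.sub (continuous_const.mul continuous_id)).continuousOn
      · exact fun x _ => (by fun_prop : DifferentiableAt ℝ (fun x => f x - c * x) x).differentiableWithinAt
      · intro x _
        have hd : deriv (fun x => f x - c * x) x = deriv f x - c := by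
          rw [deriv_fun_sub (hf x) (by fun_prop), deriv_const_mul_field, deriv_id'', mul_one]
        rw [hd]; linarith [h x]
    have := hmono (Set.left_mem_Icc.2 hsu) (Set.right_mem_Icc.2 hsu) hsu
    simp only at this
    nlinarith
  rcases le_or_gt 0 t with ht | ht
  · have := hg 0 t ht
    rw [abs_of_nonneg ht]
    have h2 : f t - f 0 ≤ |f t - f 0| := le_abs_self _
    nlinarith
  · have := hg t 0 ht.le
    rw [abs_of_neg ht]
    have h2 : -(f t - f 0) ≤ |f t - f 0| := neg_le_abs _
    nlinarith

/-- For the maps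
`W_ε(x) = (α_ε(x₁) e^{β_ε(α_ε(x₁)α_ε(x₂))}, α_ε(x₂) e^{−β_ε(α_ε(x₁)α_ε(x₂))})` on `ℝ²`,
with `α_ε' ≥ c > 0`, `α_ε(0)` convergent and `|β_ε| ≤ C`, the family `W_ε` is uniformly
proper: every compact `K ⊆ ℝ²` has a compact `K'` with `W_ε⁻¹(K) ⊆ K'` for all small `ε`. -/
theorem stmt16 (c C : ℝ) (hc : 0 < c) (hC : 0 < C)
    (α : ℝ → ℝ → ℝ) (β : ℝ → ℝ → ℝ)
    (hα : ∀ ε > (0:ℝ), ContDiff ℝ 1 (α ε))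
    (hα' : ∀ ε > (0:ℝ), ∀ t : ℝ, c ≤ deriv (α ε) t)
    (hα0 : ∃ l : ℝ, Tendsto (fun ε => α ε 0) (nhdsWithin 0 (Set.Ioi 0)) (nhds l))
    (hβ : ∀ ε > (0:ℝ), ContDiff ℝ 1 (β ε))
    (hβbdd : ∀ ε > (0:ℝ), ∀ t : ℝ, |β ε t| ≤ C) :
    ∀ K : Set (Fin 2 → ℝ), IsCompact K →
      ∃ K' : Set (Fin 2 → ℝ), IsCompact K' ∧
        ∃ ε₀ > (0:ℝ), ∀ ε, 0 < ε → ε < ε₀ →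
          (fun y : Fin 2 → ℝ =>
            ![α ε (y 0) * Real.exp (β ε (α ε (y 0) * α ε (y 1))),
              α ε (y 1) * Real.exp (-(β ε (α ε (y 0) * α ε (y 1))))]) ⁻¹' K ⊆ K' := by
  obtain ⟨l, hl⟩ := hα0
  rw [Metric.tendsto_nhdsWithin_nhds] at hl
  obtain ⟨ε₀, hε₀, hε₀'⟩ := hl 1 one_pos
  intro K hK
  obtain ⟨R, hR⟩ := hK.isBounded.subset_closedBall 0
  set B : ℝ := (R * Real.exp C + (|l| + 1)) / c with hB
  refine ⟨Metric.closedBall 0 B, isCompact_closedBall _ _, ε₀, hε₀, ?_⟩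
  intro ε hε hεε y hy
  have hεball : ε ∈ Set.Ioi (0:ℝ) := hε
  have hdist : dist ε (0:ℝ) < ε₀ := by
    rw [Real.dist_eq, sub_zero, abs_of_pos hε]; exact hεε
  have h0bd : |α ε 0| ≤ |l| + 1 := by
    have h4 := hε₀' hεball hdist
    rw [Real.dist_eq] at h4
    linarith [abs_sub_abs_le_abs_sub (α ε 0) l]
  have hmem := hR hy
  rw [Metric.mem_closedBall, dist_zero_right] at hmem
  set a := α ε (y 0) with ha
  set b := α ε (y 1) with hb
  set e := β ε (a * b) with he
  have hbe : |e| ≤ C := hβbdd ε hε _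
  have h0 : |a * Real.exp e| ≤ R := by
    have h := norm_le_pi_norm (![a * Real.exp e, b * Real.exp (-e)]) 0
    simp only [Matrix.cons_val_zero, Real.norm_eq_abs] at h
    exact h.trans hmem
  have h1 : |b * Real.exp (-e)| ≤ R := by
    have h := norm_le_pi_norm (![a * Real.exp e, b * Real.exp (-e)]) 1
    simp only [Matrix.cons_val_one, Matrix.head_cons, Real.norm_eq_abs] at h
    exact h.trans hmem
  have hRnn : 0 ≤ R := le_trans (abs_nonneg _) h0
  have habd : |a| ≤ R * Real.exp C := by
    have hexp : Real.exp (-C) ≤ Real.exp e := Real.exp_le_exp.2 (by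
      have := abs_le.1 hbe; linarith [this.1])
    have h2 : |a| * Real.exp (-C) ≤ R := by
      calc |a| * Real.exp (-C) ≤ |a| * Real.exp e :=
            mul_le_mul_of_nonneg_left hexp (abs_nonneg _)
        _ = |a * Real.exp e| := by rw [abs_mul, abs_of_pos (Real.exp_pos _)]
        _ ≤ R := h0
    have h3 := mul_le_mul_of_nonneg_right h2 (Real.exp_pos C).le
    rwa [mul_assoc, ← Real.exp_add, neg_add_cancel, Real.exp_zero, mul_one] at h3
  have hbbd : |b| ≤ R * Real.exp C := by
    have hexp : Real.exp (-C) ≤ Real.exp (-e) := Real.exp_le_exp.2 (by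
      have := abs_le.1 hbe; linarith [this.2])
    have h2 : |b| * Real.exp (-C) ≤ R := by
      calc |b| * Real.exp (-C) ≤ |b| * Real.exp (-e) :=
            mul_le_mul_of_nonneg_left hexp (abs_nonneg _)
        _ = |b * Real.exp (-e)| := by rw [abs_mul, abs_of_pos (Real.exp_pos _)]
        _ ≤ R := h1
    have h3 := mul_le_mul_of_nonneg_right h2 (Real.exp_pos C).le
    rwa [mul_assoc, ← Real.exp_add, neg_add_cancel, Real.exp_zero, mul_one] at h3
  have hdiff : Differentiable ℝ (α ε) := (hα ε hε).differentiable one_ne_zero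
  have hkey0 : c * |y 0| ≤ |a - α ε 0| := stmt16_key c (α ε) hdiff (hα' ε hε) (y 0)
  have hkey1 : c * |y 1| ≤ |b - α ε 0| := stmt16_key c (α ε) hdiff (hα' ε hε) (y 1)
  have hy0 : |y 0| ≤ B := by
    have h3 : |a - α ε 0| ≤ |a| + |α ε 0| := abs_sub _ _
    rw [hB, le_div_iff₀ hc]
    nlinarith
  have hy1 : |y 1| ≤ B := by
    have h3 : |b - α ε 0| ≤ |b| + |α ε 0| := abs_sub _ _
    rw [hB, le_div_iff₀ hc]
    nlinarith
  rw [Metric.mem_closedBall, dist_zero_right]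
  have hBnn : 0 ≤ B := le_trans (abs_nonneg _) hy0
  rw [pi_norm_le_iff_of_nonneg hBnn]
  intro i
  fin_cases i
  · simpa using hy0
  · simpa using hy1
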